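/- In the unary case n = 1, the coefficients γ_i^s = (-1)^{[(s-i+1)/2]} · Ξ_{s,i}(λ) / (2δ - i - 1 choose [(s-i+1)/2]), where Ξ_{s,i}(λ) = ([s/2] choose [i/2])·(2λ + [(s-1)/2] choose [(2(s-i)+1+(-1)^i)/4]), satisfy (-1)^{s-i} Υ(δ - s/2, s - i) γ_i^s = Υ(λ, s) γ_i^{s-1} for all 0 ≤ i < s ≤ 2k, where Υ(λ, m) = (1/2)([m/2] + (1-(-1)^m)λ), provided δ ∉ {1/2, 1, ..., k}. -/

import Mathlib

noncomputable section
open scoped BigOperators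

/-- Functions on the supercircle `S^{1|1}`: `F = f₀(x) + θ f₁(x)` is encoded
as the pair `(f₀, f₁)` of smooth-or-not complex valued functions on `ℝ`. -/
abbrev SuperFn : Type := (ℝ → ℂ) × (ℝ → ℂ)

namespace SuperFn

/-- Smoothness of a superfunction (componentwise). -/
def Smooth (F : SuperFn) : Prop := ContDiff ℝ (⊤ : ℕ∞) F.1 ∧ ContDiff ℝ (⊤ : ℕ∞) F.2

/-- Product of superfunctions: `(f₀+θf₁)(g₀+θg₁) = f₀g₀ + θ(f₀g₁+f₁g₀)` (θ²=0). -/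
def mul (F G : SuperFn) : SuperFn := (F.1 * G.1, F.1 * G.2 + F.2 * G.1)

instance : CommMonoid SuperFn where
  mul := mul
  one := ((1 : ℝ → ℂ), 0)
  npow := @npowRec SuperFn ⟨((1 : ℝ → ℂ), 0)⟩ ⟨mul⟩
  mul_assoc a b c := by
    show mul (mul a b) c = mul a (mul b c)
    unfold mul; exact Prod.ext (by ring) (by ring)
  one_mul a := by
    show mul ((1 : ℝ → ℂ), 0) a = a
    unfold mul; exact Prod.ext (by simp) (by simp)
  mul_one a := by
    show mul a ((1 : ℝ → ℂ), 0) = a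
    unfold mul; exact Prod.ext (by simp) (by simp)
  mul_comm a b := by
    show mul a b = mul b a
    unfold mul; exact Prod.ext (by ring) (by ring)

/-- The even derivative `∂ₓ`. -/
def dx (F : SuperFn) : SuperFn := (deriv F.1, deriv F.2)

/-- The odd derivative `∂_θ`. -/
def dth (F : SuperFn) : SuperFn := (F.2, 0)

/-- `D = ∂_θ + θ∂ₓ`. -/
def Dop (F : SuperFn) : SuperFn := (F.2, deriv F.1)

/-- `D̄ = ∂_θ - θ∂ₓ`. -/
def Dbar (F : SuperFn) : SuperFn := (F.2, -deriv F.1)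

/-- The odd coordinate `θ`. -/
def θf : SuperFn := (0, 1)

/-- The even coordinate `x`. -/
def xf : SuperFn := (fun t => (t : ℂ), 0)

/-- Numerical parity. -/
def pn (p : Bool) : ℕ := if p then 1 else 0

/-- `F` is homogeneous of parity `p` (`false` = even, `true` = odd). -/
def hasParity (p : Bool) (F : SuperFn) : Prop := if p then F.1 = 0 else F.2 = 0

/-- The super binomial coefficient `(j choose i)_s`. -/
def sbinom (j i : ℕ) : ℕ :=
  if i % 2 = 0 ∨ j % 2 = 1 then Nat.choose (j / 2) (i / 2) else 0

/-- The contact vector field `X_f = -f D̄² + (1/2) D(f) D̄` as operator on functions. -/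
def Xop (f G : SuperFn) : SuperFn := f * dx G + (1/2 : ℂ) • (Dop f * Dbar G)

/-- The action `𝔏^λ_{X_f}` on `λ`-densities. -/
def densL (l : ℂ) (f G : SuperFn) : SuperFn := Xop f G + l • (dx f * G)

/-- The contact bracket `{f,g}` of homogeneous contact Hamiltonians. -/
def cbr (p q : Bool) (f g : SuperFn) : SuperFn :=
  f * dx g - dx f * g + ((1/2 : ℂ) * (-1 : ℂ) ^ (pn p * (pn q + 1))) • (Dop f * Dop g)

/-- Generalized binomial coefficient `(ν choose q)`. -/
def cchoose (ν : ℂ) (q : ℕ) : ℂ := (∏ t ∈ Finset.range q, (ν - t)) / (Nat.factorial q)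

/-- `Υ(λ, m) = ½([m/2] + (1-(-1)^m) λ)`. -/
def Υ (l : ℂ) (m : ℕ) : ℂ := (1/2 : ℂ) * (((m / 2 : ℕ) : ℂ) + (1 - (-1 : ℂ)^m) * l)

/-- Index `[ (2(s-i)+1+(-1)^i)/4 ]`. -/
def Ξidx (s i : ℕ) : ℕ := if i % 2 = 0 then (2*(s-i)+2)/4 else (2*(s-i))/4

/-- `Ξ_{s,i}(λ)`. -/
def Ξ (s i : ℕ) (l : ℂ) : ℂ :=
  (Nat.choose (s/2) (i/2) : ℂ) * cchoose (2*l + (((s-1)/2 : ℕ) : ℂ)) (Ξidx s i)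

end SuperFn
namespace SuperFn

variable {n : ℕ}

/-- `|i| = i₁ + ... + i_n` for a multi-index. -/
def msum (i : Fin n → ℕ) : ℕ := ∑ t, i t

/-- `i + r·1_t`. -/
def addIdx (i : Fin n → ℕ) (t : Fin n) (r : ℕ) : Fin n → ℕ :=
  Function.update i t (i t + r)

/-- The finite set of multi-indices `i ∈ ℕⁿ` with `|i| ≤ m`. -/
def idxSet (n m : ℕ) : Finset (Fin n → ℕ) :=
  (Finset.range (m+1)).biUnion (fun ℓ => Finset.Nat.antidiagonalTuple n ℓ)

/-- The bracket `(r+i choose r+2)_s - ½(-1)^i (r+i choose r+1)_s + λ (r+i choose r)_s`. -/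
def Ccoef (r it : ℕ) (l : ℂ) : ℂ :=
  (sbinom (r+it) (r+2) : ℂ) - (1/2 : ℂ) * (-1 : ℂ)^it * (sbinom (r+it) (r+1) : ℂ)
    + l * (sbinom (r+it) r : ℂ)

/-- Coefficients `a_i^X` of `𝔏^{λ̲,μ}_{X_F}(A)` (Proposition 2.1 of the paper);
`m = 2k` and `δ = μ - Σλ`. -/
def actCoef (m : ℕ) (lam : Fin n → ℂ) (μ : ℂ) (F : SuperFn) (pF : Bool)
    (pa : (Fin n → ℕ) → Bool) (a : (Fin n → ℕ) → SuperFn) (i : Fin n → ℕ) : SuperFn :=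
  densL ((μ - ∑ t, lam t) - (msum i : ℂ)/2) F (a i)
  - ∑ t : Fin n, ∑ r ∈ Finset.Icc 1 (m - msum i),
      ((-1 : ℂ)^(r * (pn pF + pn (pa (addIdx i t r)) + ∑ j ∈ Finset.Iio t, i j))
          * Ccoef r (i t) (lam t)) •
        (Dbar^[r] (dx F) * a (addIdx i t r))

/-- The `n`-ary differential operator `A = Σ_{|i|≤m} a_i D̄^{i₁}⊗...⊗D̄^{i_n}`
applied to the tuple `φ` of densities with parities `pφ` (signs of the Koszul
rule included). -/
def opApply (m : ℕ) (a : (Fin n → ℕ) → SuperFn) (pφ : Fin n → Bool)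
    (φ : Fin n → SuperFn) : SuperFn :=
  ∑ i ∈ idxSet n m,
    ((-1 : ℂ)^(∑ p : Fin n, pn (pφ p) * (∑ q ∈ Finset.Ioi p, i q))) •
      (a i * ∏ t : Fin n, Dbar^[i t] (φ t))

/-- `φ(t) = Σ_{j≤t}(s_j - i_j)`. -/
def φf (i s : Fin n → ℕ) (t : Fin n) : ℕ := ∑ j ∈ Finset.Iic t, (s j - i j)

/-- `ψ(t) = Σ_{j<t} s_j (s_{j+1} - i_{j+1})`. -/
def ψf [NeZero n] (i s : Fin n → ℕ) (t : Fin n) : ℕ :=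
  ∑ j ∈ Finset.Iio t, s j * (s (j+1) - i (j+1))

/-- The explicit symbol-map coefficients `γ_i^s` of Theorem 3.2. -/
def γcoef [NeZero n] (lam : Fin n → ℂ) (δ : ℂ) (i s : Fin n → ℕ) : ℂ :=
  (-1 : ℂ)^((msum s - msum i + 1)/2) *
  (∏ t ∈ Finset.univ.filter (fun t : Fin n => t ≠ 0),
    ((-1 : ℂ)^(ψf i s t) * (sbinom (φf i s t) (s t - i t) : ℂ) * Ξ (s t) (i t) (lam t)) /
    ((Nat.choose (φf i s t / 2) ((s t - i t)/2) : ℂ) *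
     (Nat.choose ((φf i s t + 1)/2) ((s t - i t + 1)/2) : ℂ) *
     cchoose (2*δ - (msum i : ℂ) - 1) ((msum s - msum i + 1)/2))) *
  Ξ (s 0) (i 0) (lam 0)

/-- `γ_i^s`, extended by `0` unless `s ≥ i` componentwise. -/
def γfull [NeZero n] (lam : Fin n → ℂ) (δ : ℂ) (i s : Fin n → ℕ) : ℂ :=
  if ∀ t, i t ≤ s t then γcoef lam δ i s else 0

/-- The explicit quantization-map coefficients `β_i^s`. -/
def βcoef [NeZero n] (lam : Fin n → ℂ) (δ : ℂ) (i s : Fin n → ℕ) : ℂ :=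
  (-1 : ℂ)^((msum s - msum i - 1)/2) *
  (∏ t ∈ Finset.univ.filter (fun t : Fin n => t ≠ 0),
    ((-1 : ℂ)^(ψf i s t) * (sbinom (φf i s t) (s t - i t) : ℂ) * Ξ (s t) (i t) (lam t)) /
    ((Nat.choose (φf i s t / 2) ((s t - i t)/2) : ℂ) *
     (Nat.choose ((φf i s t + 1)/2) ((s t - i t + 1)/2) : ℂ) *
     cchoose (2*δ - (msum s : ℂ)) ((msum s - msum i + 1)/2))) *
  Ξ (s 0) (i 0) (lam 0)

/-- `β_i^s`, extended by `0` unless `s ≥ i` componentwise, with `β_i^i = γ_i^i`. -/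
def βfull [NeZero n] (lam : Fin n → ℂ) (δ : ℂ) (i s : Fin n → ℕ) : ℂ :=
  if ∀ t, i t ≤ s t then
    (if msum i < msum s then βcoef lam δ i s else γcoef lam δ i s)
  else 0

/-- A symbol (or quantization) map at the level of coefficients, with constant
coefficient matrix `c`: `a ↦ (i ↦ Σ_{|s| ≥ |i|} c_i^s D^{|s|-|i|}(a_s))`. -/
def symMap (m : ℕ) (c : (Fin n → ℕ) → (Fin n → ℕ) → ℂ)
    (a : (Fin n → ℕ) → SuperFn) (i : Fin n → ℕ) : SuperFn :=
  ∑ s ∈ (idxSet n m).filter (fun s => msum i ≤ msum s),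
    c i s • Dop^[msum s - msum i] (a s)

/-- A symbol map with (possibly non-constant) superfunction coefficients `ϖ_i^s(x,θ)`. -/
def symMapF (m : ℕ) (c : (Fin n → ℕ) → (Fin n → ℕ) → SuperFn)
    (a : (Fin n → ℕ) → SuperFn) (i : Fin n → ℕ) : SuperFn :=
  ∑ s ∈ (idxSet n m).filter (fun s => msum i ≤ msum s),
    c i s * Dop^[msum s - msum i] (a s)

/-- Non-resonance: `δ ∉ {1/2, 1, 3/2, ..., k}` (here `m = 2k`). -/
def NonResonant (δ : ℂ) (m : ℕ) : Prop := ∀ j ∈ Finset.Icc 1 m, δ ≠ (j : ℂ)/2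

end SuperFn
namespace SuperFn

private lemma cchoose_succ' (ν : ℂ) (q : ℕ) :
    cchoose ν (q+1) * ((q:ℂ)+1) = cchoose ν q * (ν - q) := by
  unfold cchoose
  rw [Finset.prod_range_succ, Nat.factorial_succ]
  have h1 : ((q.factorial : ℕ) : ℂ) ≠ 0 := Nat.cast_ne_zero.2 q.factorial_ne_zero
  have h2 : ((q:ℂ)+1) ≠ 0 := by exact_mod_cast Nat.succ_ne_zero q
  push_cast
  field_simp

private lemma cchoose_succ_left (ν : ℂ) (q : ℕ) :
    cchoose ν (q+1) * ((q:ℂ)+1) = ν * cchoose (ν - 1) q := by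
  unfold cchoose
  rw [Finset.prod_range_succ', Nat.factorial_succ]
  have hprod : (∏ x ∈ Finset.range q, (ν - ((x:ℕ)+1 : ℕ))) = ∏ x ∈ Finset.range q, (ν - 1 - x) :=
    Finset.prod_congr rfl fun x _ => by push_cast; ring
  rw [hprod]
  have h1 : ((q.factorial : ℕ) : ℂ) ≠ 0 := Nat.cast_ne_zero.2 q.factorial_ne_zero
  have h2 : ((q:ℂ)+1) ≠ 0 := by exact_mod_cast Nat.succ_ne_zero q
  push_cast
  field_simp
  ring

private lemma cchoose_ne_zero' (ν : ℂ) (q : ℕ) (h : ∀ t < q, ν - t ≠ 0) : cchoose ν q ≠ 0 := by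
  unfold cchoose
  apply div_ne_zero
  · exact Finset.prod_ne_zero_iff.2 fun t ht => h t (Finset.mem_range.1 ht)
  · exact Nat.cast_ne_zero.2 q.factorial_ne_zero

private lemma choose_shift' (a b : ℕ) (h : b < a) :
    (a - b) * a.choose b = a * (a-1).choose b := by
  obtain ⟨n, rfl⟩ : ∃ n, a = n + 1 := ⟨a-1, by omega⟩
  simp only [Nat.add_sub_cancel]
  have := Nat.choose_mul_succ_eq n b
  calc (n + 1 - b) * (n+1).choose b = (n+1).choose b * (n+1-b) := by ring
    _ = n.choose b * (n+1) := this.symm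
    _ = (n+1) * n.choose b := by ring

private lemma choose_key {a b : ℕ} (h : b < a) :
    ((a:ℂ) - b) * (a.choose b : ℂ) = (a:ℂ) * (((a-1).choose b : ℕ) : ℂ) := by
  have h2 := congrArg (fun n : ℕ => (n:ℂ)) (choose_shift' a b h)
  push_cast at h2
  rw [Nat.cast_sub (le_of_lt h)] at h2
  exact h2

private lemma cchoose_shift_ne (m : ℕ) (δ : ℂ) (hδ : NonResonant δ m) (i q : ℕ)
    (h : i + q ≤ m) : cchoose (2*δ - (i:ℂ) - 1) q ≠ 0 := by
  apply cchoose_ne_zero'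
  intro t ht heq
  apply hδ (i+1+t) (Finset.mem_Icc.2 ⟨by omega, by omega⟩)
  push_cast
  linear_combination heq / 2

end SuperFn

namespace SuperFn

/-- Unary (`n = 1`) symbol-map coefficients
`γ_i^s = (-1)^{[(s-i+1)/2]} Ξ_{s,i}(λ) / (2δ-i-1 choose [(s-i+1)/2])`. -/
def γun (lam δ : ℂ) (i s : ℕ) : ℂ :=
  (-1 : ℂ)^((s - i + 1)/2) * Ξ s i lam / cchoose (2*δ - i - 1) ((s - i + 1)/2)

set_option maxHeartbeats 1600000

/-- in the unary case the coefficients `γ_i^s` satisfy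
`(-1)^{s-i} Υ(δ-s/2, s-i) γ_i^s = Υ(λ,s) γ_i^{s-1}` for `0 ≤ i < s ≤ 2k`,
provided `δ ∉ {1/2, 1, ..., k}` (`m = 2k`). -/
theorem gamma_unary_recursion (m : ℕ) (lam δ : ℂ) (hδ : NonResonant δ m)
    (i s : ℕ) (hi : i < s) (hs : s ≤ m) :
    ((-1 : ℂ)^(s - i)) * Υ (δ - (s : ℂ)/2) (s - i) * γun lam δ i s
      = Υ lam s * γun lam δ i (s - 1) := by
  rcases Nat.even_or_odd s with ⟨a, rfl⟩ | ⟨a, rfl⟩ <;>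
    rcases Nat.even_or_odd i with ⟨b, rfl⟩ | ⟨b, rfl⟩
  · -- s even, i even
    have hba : b < a := by omega
    have key := choose_key (a := a) (b := b) hba
    unfold γun Ξ Ξidx Υ
    simp only [if_pos (show (b+b) % 2 = 0 by omega)]
    rw [show (a+a) - (b+b) = (a-b)+(a-b) by omega,
        show a+a-1-(b+b) = (a-b)+(a-b)-1 by omega,
        show ((a-b)+(a-b)+1)/2 = a - b by omega,
        show ((a-b)+(a-b))/2 = a - b by omega,
        show ((a-b)+(a-b)-1+1)/2 = a - b by omega,
        show (2*((a-b)+(a-b))+2)/4 = a - b by omega,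
        show (2*((a-b)+(a-b)-1)+2)/4 = a - b by omega,
        show (a+a)/2 = a by omega,
        show (b+b)/2 = b by omega,
        show (a+a-1)/2 = a - 1 by omega,
        show (a+a-1-1)/2 = a - 1 by omega,
        Even.neg_one_pow (⟨a-b, rfl⟩ : Even ((a-b)+(a-b))),
        Even.neg_one_pow (⟨a, rfl⟩ : Even (a+a)),
        Nat.cast_sub hba.le]
    linear_combination ((-1:ℂ)^(a-b) * cchoose (2*lam + ((a-1:ℕ):ℂ)) (a-b)
      / cchoose (2*δ - ((b+b:ℕ):ℂ) - 1) (a-b) / 2) * key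
  · -- s even, i odd
    have hba : b < a := by omega
    have hc1 : ((a-b-1:ℕ):ℂ) = (a:ℂ) - b - 1 := by
      have h' : a - b - 1 + (b + 1) = a := by omega
      have h2 := congrArg (fun n : ℕ => (n:ℂ)) h'
      push_cast at h2
      linear_combination h2
    have he : ((a:ℂ) - b) ≠ 0 :=
      sub_ne_zero.2 (by exact_mod_cast (show a ≠ b by omega))
    have hD1 : cchoose (2*δ - ((2*b+1 : ℕ):ℂ) - 1) (a-b-1+1) ≠ 0 :=
      cchoose_shift_ne m δ hδ (2*b+1) (a-b-1+1) (by omega)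
    have hD2 : cchoose (2*δ - ((2*b+1 : ℕ):ℂ) - 1) (a-b-1) ≠ 0 :=
      cchoose_shift_ne m δ hδ (2*b+1) (a-b-1) (by omega)
    have k1 := cchoose_succ' (2*δ - ((2*b+1 : ℕ):ℂ) - 1) (a-b-1)
    rw [hc1] at k1
    have k2 := choose_key (a := a) (b := b) hba
    have hc2b : ((2*b+1 : ℕ):ℂ) = 2*(b:ℂ)+1 := by push_cast; ring
    have hcaa : ((a+a : ℕ):ℂ) = (a:ℂ)+(a:ℂ) := by push_cast; ring
    rw [hc2b] at k1
    unfold γun Ξ Ξidx Υ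
    simp only [if_neg (show ¬ ((2*b+1) % 2 = 0) by omega)]
    rw [show (a+a) - (2*b+1) = 2*(a-b-1)+1 by omega,
        show a+a-1-(2*b+1) = (a-b-1)+(a-b-1) by omega,
        show (2*(a-b-1)+1+1)/2 = (a-b-1)+1 by omega,
        show (2*(a-b-1)+1)/2 = a-b-1 by omega,
        show ((a-b-1)+(a-b-1)+1)/2 = a-b-1 by omega,
        show (2*(2*(a-b-1)+1))/4 = a-b-1 by omega,
        show (2*((a-b-1)+(a-b-1)))/4 = a-b-1 by omega,
        show (a+a)/2 = a by omega,
        show (2*b+1)/2 = b by omega,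
        show (a+a-1)/2 = a - 1 by omega,
        show (a+a-1-1)/2 = a - 1 by omega,
        Odd.neg_one_pow (⟨a-b-1, rfl⟩ : Odd (2*(a-b-1)+1)),
        Even.neg_one_pow (⟨a, rfl⟩ : Even (a+a)),
        hc1]
    simp only [← mul_div_assoc]
    rw [div_eq_div_iff hD1 hD2, hc2b, hcaa]
    apply mul_left_cancel₀ he
    linear_combination
      ((-1:ℂ)^(a-b-1) * cchoose (2*lam + ((a-1:ℕ):ℂ)) (a-b-1) * (2*δ - (a:ℂ) - b - 1)
        * cchoose (2*δ - (2*(b:ℂ)+1) - 1) (a-b-1) / 2) * k2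
      - ((-1:ℂ)^(a-b-1) * cchoose (2*lam + ((a-1:ℕ):ℂ)) (a-b-1) * (a:ℂ)
        * (((a-1).choose b : ℕ):ℂ) / 2) * k1
  · -- s odd, i even
    have hba : b ≤ a := by omega
    rcases Nat.eq_zero_or_pos a with rfl | ha1
    · -- a = 0 : s = 1, i = 0
      have hb0 : b = 0 := by omega
      subst hb0
      have h1 : (2:ℂ)*δ - 1 ≠ 0 := by
        intro h
        apply hδ 1 (Finset.mem_Icc.2 ⟨le_refl 1, by omega⟩)
        push_cast
        linear_combination h / 2
      norm_num [γun, Ξ, Ξidx, Υ, cchoose, Nat.factorial]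
      field_simp
    · have hcab : ((a-b:ℕ):ℂ) = (a:ℂ) - b := Nat.cast_sub hba
      have he1 : ((a:ℂ) - (b:ℂ) + 1) ≠ 0 := by
        have h0 : ((a-b+1:ℕ):ℂ) ≠ 0 := Nat.cast_ne_zero.2 (by omega)
        push_cast [Nat.cast_sub hba] at h0
        exact h0
      have hca : 2*lam + ((a-1:ℕ):ℂ) = 2*lam + (a:ℂ) - 1 := by
        push_cast [Nat.cast_sub (show 1 ≤ a by omega)]
        ring
      have hD1 : cchoose (2*δ - ((b+b : ℕ):ℂ) - 1) (a-b+1) ≠ 0 :=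
        cchoose_shift_ne m δ hδ (b+b) (a-b+1) (by omega)
      have hD2 : cchoose (2*δ - ((b+b : ℕ):ℂ) - 1) (a-b) ≠ 0 :=
        cchoose_shift_ne m δ hδ (b+b) (a-b) (by omega)
      have hcbb : ((b+b : ℕ):ℂ) = (b:ℂ)+(b:ℂ) := by push_cast; ring
      have hc2a1 : ((2*a+1 : ℕ):ℂ) = 2*(a:ℂ)+1 := by push_cast; ring
      have k1 := cchoose_succ' (2*δ - ((b+b : ℕ):ℂ) - 1) (a-b)
      rw [hcab, hcbb] at k1
      have k3 := cchoose_succ_left (2*lam + (a:ℂ)) (a-b)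
      rw [hcab] at k3
      unfold γun Ξ Ξidx Υ
      simp only [if_pos (show (b+b) % 2 = 0 by omega)]
      rw [show (2*a+1) - (b+b) = 2*(a-b)+1 by omega,
          show 2*a+1-1-(b+b) = (a-b)+(a-b) by omega,
          show (2*(a-b)+1+1)/2 = (a-b)+1 by omega,
          show (2*(a-b)+1)/2 = a-b by omega,
          show ((a-b)+(a-b)+1)/2 = a-b by omega,
          show (2*(2*(a-b)+1)+2)/4 = (a-b)+1 by omega,
          show (2*((a-b)+(a-b))+2)/4 = a-b by omega,
          show (2*a+1)/2 = a by omega,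
          show (b+b)/2 = b by omega,
          show (2*a+1-1)/2 = a by omega,
          show (2*a+1-1-1)/2 = a - 1 by omega,
          Odd.neg_one_pow (⟨a-b, rfl⟩ : Odd (2*(a-b)+1)),
          Odd.neg_one_pow (⟨a, rfl⟩ : Odd (2*a+1)),
          hca, hcab]
      simp only [← mul_div_assoc]
      rw [div_eq_div_iff hD1 hD2, hcbb, hc2a1]
      apply mul_left_cancel₀ he1
      linear_combination
        ((-1:ℂ)^(a-b) * ((a.choose b : ℕ):ℂ) * (2*δ - (a:ℂ) - b - 1)
          * cchoose (2*δ - ((b:ℂ)+(b:ℂ)) - 1) (a-b) / 2) * k3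
        - ((-1:ℂ)^(a-b) * ((a.choose b : ℕ):ℂ) * ((a:ℂ) + 2*lam)
          * cchoose (2*lam + (a:ℂ) - 1) (a-b) / 2) * k1
  · -- s odd, i odd
    have hba : b < a := by omega
    have hc1 : ((a-b-1:ℕ):ℂ) = (a:ℂ) - b - 1 := by
      have h' : a - b - 1 + (b + 1) = a := by omega
      have h2 := congrArg (fun n : ℕ => (n:ℂ)) h'
      push_cast at h2
      linear_combination h2
    have hca : 2*lam + ((a-1:ℕ):ℂ) = 2*lam + (a:ℂ) - 1 := by
      push_cast [Nat.cast_sub (show 1 ≤ a by omega)]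
      ring
    have key := cchoose_succ_left (2*lam + (a:ℂ)) (a-b-1)
    rw [hc1] at key
    unfold γun Ξ Ξidx Υ
    simp only [if_neg (show ¬ ((2*b+1) % 2 = 0) by omega)]
    rw [show (2*a+1) - (2*b+1) = (a-b)+(a-b) by omega,
        show 2*a+1-1-(2*b+1) = (a-b)+(a-b)-1 by omega,
        show ((a-b)+(a-b)+1)/2 = a-b by omega,
        show ((a-b)+(a-b))/2 = a-b by omega,
        show ((a-b)+(a-b)-1+1)/2 = a-b by omega,
        show (2*((a-b)+(a-b)))/4 = (a-b-1)+1 by omega,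
        show (2*((a-b)+(a-b)-1))/4 = a-b-1 by omega,
        show (2*a+1)/2 = a by omega,
        show (2*b+1)/2 = b by omega,
        show (2*a+1-1)/2 = a by omega,
        show (2*a+1-1-1)/2 = a - 1 by omega,
        Even.neg_one_pow (⟨a-b, rfl⟩ : Even ((a-b)+(a-b))),
        Odd.neg_one_pow (⟨a, rfl⟩ : Odd (2*a+1)),
        hca, Nat.cast_sub hba.le]
    linear_combination ((-1:ℂ)^(a-b) * ((a.choose b : ℕ):ℂ)
      / cchoose (2*δ - ((2*b+1:ℕ):ℂ) - 1) (a-b) / 2) * key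

end SuperFn
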